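/- Let X be a countable collection of languages and K ∈ X. The following are equivalent: (a) for every index-based generation algorithm f that guarantees validity for X, there exists an enumeration E of K such that liminf_{t→∞} μ_up(L_{i_t}, K) = 0, where i_t = f(w_1, …, w_t); (b) for every ε > 0 there exists an infinite perfect tower of languages from X with terminal language K in which every language Λ_j satisfies μ_up(Λ_j, K) ≤ ε. -/

import Mathlib

/-!
Both sides are equivalent to the existence, for every `ε > 0`, of sparse covers: every finite
subset of `K` lies in some `L i ⊊ K` of upper density at most `ε`. A perfect tower gives such
covers, because every word of `K` lies in all but finitely many `Λ j`. Conversely, covers of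
growing initial segments of `K`, thinned out so that a word missing from one of them lies in all
later ones, form a perfect tower.

Given sparse covers for every `ε`, an adversary alternately adds the next word of `K` and then
enumerates a sparse cover of the current sample until the valid algorithm has committed to a
subset of it; this forces guesses of density below `1 / (m + 1)` infinitely often. Without sparse
covers for some `ε`, the Kleinberg–Mullainathan critical-language algorithm eventually guesses a
language containing a fixed uncoverable finite set and contained in `K`, so its density stays
at least `min ε 1`.
-/

/-- The finite prefix `[E 0, …, E t]` of the adversary's enumeration. -/
def epref (E : ℕ → ℕ) (t : ℕ) : List ℕ := (List.range (t + 1)).map E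

/-- `E` is an enumeration of the language `K`. -/
def IsEnum (E : ℕ → ℕ) (K : Set ℕ) : Prop := Function.Injective E ∧ Set.range E = K

/-- The upper density of `L` in the infinite set `K`:
`limsup_{N→∞} |L ∩ {k_1,…,k_N}| / N`, where `k_1 < k_2 < ⋯` lists `K` in
increasing order (`Nat.nth (· ∈ K)` gives this listing, 0-indexed). -/
noncomputable def upperDensity (L K : Set ℕ) : ℝ :=
  Filter.limsup
    (fun N : ℕ => ((Set.ncard {n : ℕ | n < N ∧ Nat.nth (· ∈ K) n ∈ L}) : ℝ) / N)
    Filter.atTop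

/-- The sets `B_k` associated with a sequence of languages:
`B_0 = ⋂_i Λ i` and `B_k = (⋂_{i ≥ k} Λ i) \ (B_0 ∪ ⋯ ∪ B_{k-1})`. -/
def towerB (Λ : ℕ → Set ℕ) : ℕ → Set ℕ
  | k => {w | ∀ i, k ≤ i → w ∈ Λ i} \ {w | ∃ m, ∃ _ : m < k, w ∈ towerB Λ m}

/-- `(Λ 0, Λ 1, …)` is an infinite perfect tower of (pairwise distinct, infinite)
languages with terminal language `K`. -/
structure IsPerfectTower (Λ : ℕ → Set ℕ) (K : Set ℕ) : Prop where
  injective : Function.Injective Λ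
  infinite : ∀ j, (Λ j).Infinite
  proper : ∀ j, Λ j ⊂ K
  nonempty : ∀ j, (towerB Λ j).Nonempty
  complete : (⋃ j, towerB Λ j) = K

/-- The index-based generation algorithm `f` guarantees validity for the collection
`L`: on any enumeration of any member of the collection, its guesses are eventually
always subsets of the enumerated language. -/
def GuaranteesValidity (L : ℕ → Set ℕ) (f : List ℕ → ℕ) : Prop :=
  ∀ (i : ℕ) (E : ℕ → ℕ), IsEnum E (L i) →
    ∃ t0 : ℕ, ∀ t ≥ t0, L (f (epref E t)) ⊆ L i

open Filter Set

section Density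

noncomputable def densityRatio (L K : Set ℕ) (N : ℕ) : ℝ :=
  ((Set.ncard {n : ℕ | n < N ∧ Nat.nth (· ∈ K) n ∈ L}) : ℝ) / N

lemma upperDensity_eq_limsup (L K : Set ℕ) :
    upperDensity L K = limsup (densityRatio L K) atTop := rfl

lemma densityRatio_nonneg (L K : Set ℕ) (N : ℕ) : 0 ≤ densityRatio L K N := by
  unfold densityRatio; positivity

lemma densityRatio_mono {L L' : Set ℕ} (K : Set ℕ) (h : L ⊆ L') (N : ℕ) :
    densityRatio L K N ≤ densityRatio L' K N := by
  unfold densityRatio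
  gcongr
  exact (finite_Iio N).subset fun n hn => hn.1

lemma densityRatio_le_one (L K : Set ℕ) (N : ℕ) : densityRatio L K N ≤ 1 := by
  unfold densityRatio
  rcases N.eq_zero_or_pos with rfl | hN
  · simp
  rw [div_le_one (by exact_mod_cast hN)]
  calc ((Set.ncard {n : ℕ | n < N ∧ Nat.nth (· ∈ K) n ∈ L}) : ℝ) ≤ (Iio N).ncard :=
        Nat.cast_le.2 (ncard_le_ncard (fun n hn => hn.1) (finite_Iio N))
    _ = N := by rw [ncard_Iio_nat]

lemma densityRatio_self {K : Set ℕ} (hK : K.Infinite) {N : ℕ} (hN : N ≠ 0) :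
    densityRatio K K N = 1 := by
  have hset : {n : ℕ | n < N ∧ Nat.nth (· ∈ K) n ∈ K} = Iio N := by
    ext n
    exact ⟨fun h => h.1, fun h => ⟨h, Nat.nth_mem_of_infinite hK n⟩⟩
  rw [densityRatio, hset, ncard_Iio_nat, div_self (by exact_mod_cast hN)]

lemma upperDensity_nonneg (L K : Set ℕ) : 0 ≤ upperDensity L K :=
  le_limsup_of_frequently_le (Frequently.of_forall (densityRatio_nonneg L K))
    (isBoundedUnder_of ⟨1, densityRatio_le_one L K⟩)

lemma upperDensity_le_one (L K : Set ℕ) : upperDensity L K ≤ 1 :=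
  limsup_le_of_le (isBoundedUnder_of ⟨0, densityRatio_nonneg L K⟩).isCoboundedUnder_le
    (Eventually.of_forall (densityRatio_le_one L K))

lemma upperDensity_mono {L L' : Set ℕ} (K : Set ℕ) (h : L ⊆ L') :
    upperDensity L K ≤ upperDensity L' K :=
  limsup_le_limsup (Eventually.of_forall (densityRatio_mono K h))
    (isBoundedUnder_of ⟨0, densityRatio_nonneg L K⟩).isCoboundedUnder_le
    (isBoundedUnder_of ⟨1, densityRatio_le_one L' K⟩)

lemma upperDensity_self {K : Set ℕ} (hK : K.Infinite) : upperDensity K K = 1 := by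
  rw [upperDensity_eq_limsup, limsup_congr (eventually_ne_atTop 0 |>.mono
    fun _ hN => densityRatio_self hK hN), limsup_const]

end Density

lemma liminf_eq_zero_iff_frequently_lt {u : ℕ → ℝ} (h0 : ∀ t, 0 ≤ u t)
    (hbdd : IsBoundedUnder (· ≤ ·) atTop u) :
    liminf u atTop = 0 ↔ ∀ δ > 0, ∃ᶠ t in atTop, u t < δ := by
  have hbdd' : IsBoundedUnder (· ≥ ·) atTop u := isBoundedUnder_of ⟨0, h0⟩
  constructor
  · intro h δ hδ
    exact frequently_lt_of_liminf_lt hbdd.isCoboundedUnder_ge (h ▸ hδ)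
  · intro h
    refine le_antisymm (le_of_forall_pos_le_add fun δ hδ => ?_)
      (le_liminf_of_le hbdd.isCoboundedUnder_ge (Eventually.of_forall h0))
    rw [zero_add]
    exact liminf_le_of_frequently_le ((h δ hδ).mono fun _ => le_of_lt) hbdd'

lemma liminf_upperDensity_eq_zero_iff (Γ : ℕ → Set ℕ) (K : Set ℕ) :
    liminf (fun t => upperDensity (Γ t) K) atTop = 0 ↔
      ∀ δ > 0, ∃ᶠ t in atTop, upperDensity (Γ t) K < δ :=
  liminf_eq_zero_iff_frequently_lt (fun _ => upperDensity_nonneg _ _)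
    (isBoundedUnder_of ⟨1, fun _ => upperDensity_le_one _ _⟩)

section Tower

variable (Λ : ℕ → Set ℕ)

lemma towerB_subset (k : ℕ) : towerB Λ k ⊆ {w | ∀ i, k ≤ i → w ∈ Λ i} := by
  rw [towerB]; exact sdiff_subset

lemma towerB_zero : towerB Λ 0 = {w | ∀ i, w ∈ Λ i} := by
  rw [towerB]; ext w; simp

lemma mem_towerB_succ {k w : ℕ} (h : ∀ i, k < i → w ∈ Λ i) (hk : w ∉ Λ k) :
    w ∈ towerB Λ (k + 1) := by
  rw [towerB]
  exact ⟨h, fun ⟨m, hm, hw⟩ => hk (towerB_subset Λ m hw k (Nat.lt_succ_iff.mp hm))⟩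

lemma iUnion_towerB : ⋃ k, towerB Λ k = {w | ∀ᶠ i in atTop, w ∈ Λ i} := by
  ext w
  simp only [mem_iUnion, mem_ofPred_eq, eventually_atTop]
  constructor
  · rintro ⟨k, hk⟩
    exact ⟨k, towerB_subset Λ k hk⟩
  · rintro ⟨k, hk⟩
    by_contra! hw
    exact hw k (by rw [towerB]; exact ⟨hk, fun ⟨m, _, hm⟩ => hw m hm⟩)

variable {Λ}

lemma isPerfectTower_of_separating {K : Set ℕ} (hinf : ∀ j, (Λ j).Infinite)
    (hproper : ∀ j, Λ j ⊂ K) (hcover : ∀ w ∈ K, ∀ᶠ j in atTop, w ∈ Λ j) {a : ℕ}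
    (ha : ∀ j, a ∈ Λ j) {W : ℕ → ℕ} (hW : ∀ j, W j ∉ Λ j)
    (hW_later : ∀ j j', j < j' → W j ∈ Λ j') : IsPerfectTower Λ K where
  injective j j' h := by
    by_contra hne
    rcases Nat.lt_or_gt_of_ne hne with hlt | hlt
    · exact hW j (h ▸ hW_later j j' hlt)
    · exact hW j' (h ▸ hW_later j' j hlt)
  infinite := hinf
  proper := hproper
  nonempty
    | 0 => ⟨a, by rw [towerB_zero]; exact ha⟩
    | j + 1 => ⟨W j, mem_towerB_succ Λ (hW_later j) (hW j)⟩
  complete := by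
    rw [iUnion_towerB]
    ext w
    exact ⟨fun hw => let ⟨j, hj⟩ := hw.exists; (hproper j).subset hj, hcover w⟩

end Tower

section Covers

variable {L : ℕ → Set ℕ} {K : Set ℕ} {ε : ℝ}

def HasSparseCovers (L : ℕ → Set ℕ) (K : Set ℕ) (ε : ℝ) : Prop :=
  ∀ S : Finset ℕ, ↑S ⊆ K → ∃ i, ↑S ⊆ L i ∧ L i ⊂ K ∧ upperDensity (L i) K ≤ ε

lemma IsPerfectTower.hasSparseCovers {Λ : ℕ → Set ℕ} (hT : IsPerfectTower Λ K)
    (hX : ∀ j, ∃ i, Λ j = L i) (hd : ∀ j, upperDensity (Λ j) K ≤ ε) :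
    HasSparseCovers L K ε := by
  intro S hS
  have hev : ∀ᶠ j in atTop, ∀ w ∈ S, w ∈ Λ j := by
    refine (eventually_all_finset S).2 fun w hw => ?_
    have hw' : w ∈ ⋃ k, towerB Λ k := hT.complete ▸ hS hw
    rwa [iUnion_towerB] at hw'
  obtain ⟨j, hj⟩ := hev.exists
  obtain ⟨i, hi⟩ := hX j
  exact ⟨i, hi ▸ hj, hi ▸ hT.proper j, hi ▸ hd j⟩

lemma HasSparseCovers.exists_isPerfectTower (hinf : ∀ i, (L i).Infinite)
    (hC : HasSparseCovers L K ε) :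
    ∃ Λ : ℕ → Set ℕ, (∀ j, ∃ i, Λ j = L i) ∧ IsPerfectTower Λ K ∧
      ∀ j, upperDensity (Λ j) K ≤ ε := by
  classical
  -- a sparse cover of `∅` is a proper subset of `K`, so `K` is nonempty
  obtain ⟨a, haK, -⟩ := exists_of_ssubset (hC ∅ (by simp)).choose_spec.2.1
  set S : ℕ → Finset ℕ := fun m => insert a ((Finset.range m).filter (· ∈ K))
  have hSK : ∀ m, ↑(S m) ⊆ K := fun m w hw => by
    simp only [S, Finset.coe_insert, Finset.coe_filter, mem_insert_iff, mem_ofPred_eq] at hw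
    rcases hw with rfl | ⟨-, hw⟩ <;> assumption
  choose I hIS hIK hId using fun m => hC (S m) (hSK m)
  have hcover : ∀ w ∈ K, ∀ᶠ m in atTop, w ∈ L (I m) := fun w hw =>
    eventually_atTop.2 ⟨w + 1, fun m hm => hIS m (by simp [S, hw]; omega)⟩
  choose W hWK hW using fun m => exists_of_ssubset (hIK m)
  obtain ⟨φ, -, hφ⟩ := exists_seq_of_forall_finset_exists (fun _ => True)
    (fun m m' => m < m' ∧ W m ∈ L (I m')) fun s _ => by
      obtain ⟨m', hm'⟩ := ((eventually_all_finset s).2 fun m _ =>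
        (eventually_gt_atTop m).and (hcover _ (hWK m))).exists
      exact ⟨m', trivial, hm'⟩
  have hφ_mono : StrictMono φ := fun m n h => (hφ m n h).1
  refine ⟨fun j => L (I (φ j)), fun j => ⟨_, rfl⟩, ?_, fun j => hId _⟩
  exact isPerfectTower_of_separating (fun j => hinf _) (fun j => hIK _)
    (fun w hw => hφ_mono.tendsto_atTop.eventually (hcover w hw))
    (fun j => hIS _ (Finset.mem_insert_self a _)) (fun j => hW _) fun j j' h => (hφ j j' h).2

end Covers

section Enumerations

variable {E : ℕ → ℕ}

lemma length_epref (E : ℕ → ℕ) (t : ℕ) : (epref E t).length = t + 1 := by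
  simp [epref]

lemma mem_epref {n t : ℕ} (h : n ≤ t) : E n ∈ epref E t :=
  List.mem_map_of_mem (List.mem_range.2 (Nat.lt_succ_of_le h))

lemma mem_range_of_mem_epref {t x : ℕ} (h : x ∈ epref E t) : x ∈ range E := by
  obtain ⟨n, -, rfl⟩ := List.mem_map.1 h
  exact mem_range_self n

lemma nodup_epref (hE : Function.Injective E) (t : ℕ) : (epref E t).Nodup :=
  List.nodup_range.map hE

lemma eventually_subset_epref (S : Finset ℕ) (hS : ↑S ⊆ range E) :
    ∀ᶠ t in atTop, ∀ x ∈ S, x ∈ epref E t :=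
  (eventually_all_finset S).2 fun _ hx =>
    let ⟨n, hn⟩ := hS hx
    eventually_atTop.2 ⟨n, fun _ ht => hn ▸ mem_epref ht⟩

end Enumerations

section CriticalGuess

variable (L : ℕ → Set ℕ)

def IsConsistent (σ : List ℕ) (j : ℕ) : Prop := ∀ x ∈ σ, x ∈ L j

def IsCritical (σ : List ℕ) (j : ℕ) : Prop :=
  IsConsistent L σ j ∧ ∀ j' < j, IsConsistent L σ j' → L j ⊆ L j'

open Classical in
/-- The Kleinberg–Mullainathan algorithm (`0` when no index up to the sample length is
critical). -/
noncomputable def criticalGuess (σ : List ℕ) : ℕ :=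
  Nat.findGreatest (IsCritical L σ) σ.length

variable {L} {E : ℕ → ℕ} {i : ℕ}

open Classical in
lemma le_criticalGuess {σ : List ℕ} (hi : IsCritical L σ i) (hlen : i ≤ σ.length) :
    i ≤ criticalGuess L σ :=
  Nat.le_findGreatest hlen hi

open Classical in
lemma isCritical_criticalGuess {σ : List ℕ} (hi : IsCritical L σ i) (hlen : i ≤ σ.length) :
    IsCritical L σ (criticalGuess L σ) :=
  Nat.findGreatest_spec hlen hi

lemma eventually_isCritical (hE : IsEnum E (L i)) :
    ∀ᶠ t in atTop, IsCritical L (epref E t) i := by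
  have hcons : ∀ t, IsConsistent L (epref E t) i := fun t x hx =>
    hE.2 ▸ mem_range_of_mem_epref hx
  have hearlier : ∀ j ∈ Iio i, ∀ᶠ t in atTop, IsConsistent L (epref E t) j → L i ⊆ L j := by
    intro j _
    by_cases hij : L i ⊆ L j
    · exact Eventually.of_forall fun _ _ => hij
    obtain ⟨w, hwi, hwj⟩ := not_subset.1 hij
    obtain ⟨n, rfl⟩ : w ∈ range E := hE.2.symm ▸ hwi
    exact eventually_atTop.2 ⟨n, fun t ht hc => absurd (hc _ (mem_epref ht)) hwj⟩
  filter_upwards [(finite_Iio i).eventually_all.2 hearlier] with t ht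
  exact ⟨hcons t, ht⟩

lemma eventually_isConsistent_criticalGuess_and_subset (hE : IsEnum E (L i)) :
    ∀ᶠ t in atTop, IsConsistent L (epref E t) (criticalGuess L (epref E t)) ∧
      L (criticalGuess L (epref E t)) ⊆ L i := by
  filter_upwards [eventually_isCritical hE, eventually_ge_atTop i] with t hi ht
  have hlen : i ≤ (epref E t).length := by rw [length_epref]; omega
  have hle := le_criticalGuess hi hlen
  have hcrit := isCritical_criticalGuess hi hlen
  refine ⟨hcrit.1, ?_⟩
  rcases hle.eq_or_lt with h | h
  · exact h ▸ subset_rfl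
  · exact hcrit.2 i h hi.1

lemma guaranteesValidity_criticalGuess : GuaranteesValidity L (criticalGuess L) :=
  fun _ _ hE => eventually_atTop.1
    ((eventually_isConsistent_criticalGuess_and_subset hE).mono fun _ h => h.2)

/-- Without sparse covers some finite `S ⊆ K` lies in no sparse proper sublanguage; once the
sample contains `S`, the critical guess is such a sublanguage or `K` itself. -/
lemma eventually_le_upperDensity_criticalGuess {z : ℕ} (hK : (L z).Infinite) {ε : ℝ}
    (hC : ¬HasSparseCovers L (L z) ε) (hE : IsEnum E (L z)) :
    ∀ᶠ t in atTop, min ε 1 ≤ upperDensity (L (criticalGuess L (epref E t))) (L z) := by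
  obtain ⟨S, hSK, hS⟩ : ∃ S : Finset ℕ, ↑S ⊆ L z ∧
      ∀ i, ↑S ⊆ L i → L i ⊂ L z → ε < upperDensity (L i) (L z) := by
    simpa [HasSparseCovers] using hC
  filter_upwards [eventually_isConsistent_criticalGuess_and_subset hE,
    eventually_subset_epref S (hE.2 ▸ hSK)] with t ⟨hcons, hsub⟩ hSt
  by_cases heq : L (criticalGuess L (epref E t)) = L z
  · rw [heq, upperDensity_self hK]
    exact min_le_right _ _
  · exact (min_le_left _ _).trans
      (hS _ (fun x hx => hcons x (hSt x hx)) (hsub.ssubset_of_ne heq)).le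

end CriticalGuess

section Adversary

lemma exists_isEnum_prefix {S : Set ℕ} (hS : S.Infinite) {q : List ℕ} (hq : q.Nodup)
    (hqS : ∀ x ∈ q, x ∈ S) :
    ∃ E, IsEnum E S ∧ ∀ t, q.length ≤ t + 1 → q <+: epref E t := by
  set R := S \ {x | x ∈ q}
  have hR : R.Infinite := hS.sdiff q.finite_toSet
  have hqR : ∀ n (h : n < q.length), q[n] ∉ R := fun n h hn => hn.2 (List.getElem_mem h)
  let E : ℕ → ℕ := fun n =>
    if h : n < q.length then q[n] else Nat.nth (· ∈ R) (n - q.length)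
  refine ⟨E, ⟨fun a b hab => ?_, ?_⟩, fun t ht => ?_⟩
  · simp only [E] at hab
    split_ifs at hab with ha hb hb
    · exact hq.getElem_inj_iff.1 hab
    · exact absurd (hab ▸ Nat.nth_mem_of_infinite hR _) (hqR a ha)
    · exact absurd (hab ▸ Nat.nth_mem_of_infinite hR _) (hqR b hb)
    · have := Nat.nth_injective hR hab
      omega
  · ext x
    constructor
    · rintro ⟨n, rfl⟩
      simp only [E]
      split_ifs with h
      · exact hqS _ (List.getElem_mem h)
      · exact (Nat.nth_mem_of_infinite hR _).1
    · intro hx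
      by_cases hxq : x ∈ q
      · obtain ⟨n, hn, rfl⟩ := List.getElem_of_mem hxq
        exact ⟨n, by simp [E, hn]⟩
      · obtain ⟨j, hj⟩ := Nat.subset_range_nth (p := (· ∈ R)) ⟨hx, hxq⟩
        exact ⟨q.length + j, by simpa [E] using hj⟩
  · rw [List.prefix_iff_eq_take]
    refine List.ext_getElem (by simp [length_epref]; omega) fun n h₁ h₂ => ?_
    simp [epref, E, h₁]

variable {L : ℕ → Set ℕ} {K : Set ℕ}

/-- One round of the adversary: extend the sample by `x` and then by an enumeration of a sparse
sublanguage `L i` of `K` until the valid algorithm has committed to a subset of `L i`. -/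
lemma exists_extension_upperDensity_le (hinf : ∀ i, (L i).Infinite) {δ : ℝ}
    (hC : HasSparseCovers L K δ) {f : List ℕ → ℕ} (hf : GuaranteesValidity L f)
    {p : List ℕ} (hp : p.Nodup) (hpK : ∀ x ∈ p, x ∈ K) {x : ℕ} (hx : x ∈ K) :
    ∃ q : List ℕ, q.Nodup ∧ (∀ y ∈ q, y ∈ K) ∧ p <+: q ∧ p.length < q.length ∧ x ∈ q ∧
      upperDensity (L (f q)) K ≤ δ := by
  classical
  obtain ⟨q₁, hq₁, hq₁K, hpq₁, hxq₁⟩ :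
      ∃ q₁ : List ℕ, q₁.Nodup ∧ (∀ y ∈ q₁, y ∈ K) ∧ p <+: q₁ ∧ x ∈ q₁ := by
    by_cases hxp : x ∈ p
    · exact ⟨p, hp, hpK, List.prefix_refl p, hxp⟩
    · refine ⟨p ++ [x], ?_, ?_, List.prefix_append p [x], by simp⟩
      · exact List.nodup_append.2 ⟨hp, List.nodup_singleton x,
          fun a ha b hb hab => hxp (by simp_all)⟩
      · simpa [or_imp, forall_and] using ⟨hpK, hx⟩
  obtain ⟨i, hq₁i, hiK, hid⟩ := hC q₁.toFinset (by simpa [subset_def] using hq₁K)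
  obtain ⟨E, hE, hq₁E⟩ := exists_isEnum_prefix (hinf i) hq₁
    (fun y hy => hq₁i (by simpa using hy))
  obtain ⟨t₀, ht₀⟩ := hf i E hE
  set T := max t₀ q₁.length
  have hq₁T : q₁ <+: epref E T := hq₁E T (by omega)
  refine ⟨epref E T, nodup_epref hE.1 T,
    fun y hy => hiK.subset (hE.2 ▸ mem_range_of_mem_epref hy), hpq₁.trans hq₁T, ?_,
    hq₁T.mem hxq₁, (upperDensity_mono K (ht₀ T (le_max_left _ _))).trans hid⟩
  rw [length_epref]
  have := hpq₁.length_le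
  omega

lemma exists_getElem_eq_of_prefix_chain (P : ℕ → List ℕ) (hP : ∀ m, P m <+: P (m + 1))
    (hlen : ∀ m, m < (P (m + 1)).length) :
    ∃ E : ℕ → ℕ, ∀ m n (h : n < (P m).length), E n = (P m)[n] := by
  have hmono : ∀ {a b}, a ≤ b → P a <+: P b := by
    intro a b hab
    induction b, hab using Nat.le_induction with
    | base => exact List.prefix_refl _
    | succ n _ ih => exact ih.trans (hP n)
  refine ⟨fun n => (P (n + 1))[n]'(hlen n), fun m n h => ?_⟩
  rcases le_total (n + 1) m with hnm | hmn
  · exact (hmono hnm).getElem (hlen n)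
  · exact ((hmono hmn).getElem h).symm

lemma exists_isEnum_of_forall_extension (hK : K.Infinite) (G : ℕ → List ℕ → Prop)
    (hext : ∀ m p, p.Nodup → (∀ x ∈ p, x ∈ K) → ∀ x ∈ K, ∃ q : List ℕ, q.Nodup ∧
      (∀ y ∈ q, y ∈ K) ∧ p <+: q ∧ p.length < q.length ∧ x ∈ q ∧ G m q) :
    ∃ E, IsEnum E K ∧ ∀ m, ∃ t ≥ m, G m (epref E t) := by
  choose! next hnext using hext
  set k := Nat.nth (· ∈ K)
  have hk : ∀ m, k m ∈ K := Nat.nth_mem_of_infinite hK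
  let P : ℕ → List ℕ := fun m => Nat.rec [] (fun m p => next m p (k m)) m
  have hP : ∀ m, (P m).Nodup ∧ (∀ y ∈ P m, y ∈ K) := by
    intro m
    induction m with
    | zero => simp [P]
    | succ m ih =>
      obtain ⟨h₁, h₂, -⟩ := hnext m (P m) ih.1 ih.2 (k m) (hk m)
      exact ⟨h₁, h₂⟩
  have hstep : ∀ m, P m <+: P (m + 1) ∧ (P m).length < (P (m + 1)).length ∧
      k m ∈ P (m + 1) ∧ G m (P (m + 1)) := fun m =>
    (hnext m (P m) (hP m).1 (hP m).2 (k m) (hk m)).2.2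
  have hlen : ∀ m, m < (P (m + 1)).length := by
    intro m
    induction m with
    | zero => exact (hstep 0).2.1
    | succ m ih => have := (hstep (m + 1)).2.1; omega
  obtain ⟨E, hE⟩ := exists_getElem_eq_of_prefix_chain P (fun m => (hstep m).1) hlen
  have hepref : ∀ m, epref E ((P (m + 1)).length - 1) = P (m + 1) := by
    intro m
    have := hlen m
    refine List.ext_getElem (by rw [length_epref]; omega) fun n _ h => ?_
    simp [epref, hE (m + 1) n h]
  refine ⟨E, ⟨fun a b hab => ?_, ?_⟩, fun m =>
    ⟨_, by have := hlen m; omega, hepref m ▸ (hstep m).2.2.2⟩⟩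
  · have ha : a < (P (max a b + 1)).length := (le_max_left a b).trans_lt (hlen _)
    have hb : b < (P (max a b + 1)).length := (le_max_right a b).trans_lt (hlen _)
    rw [hE (max a b + 1) a ha, hE (max a b + 1) b hb] at hab
    exact (hP (max a b + 1)).1.getElem_inj_iff.1 hab
  · ext x
    constructor
    · rintro ⟨n, rfl⟩
      rw [hE (n + 1) n (hlen n)]
      exact (hP (n + 1)).2 _ (List.getElem_mem _)
    · intro hx
      obtain ⟨m, rfl⟩ := Nat.subset_range_nth hx
      obtain ⟨n, hn, hnm⟩ := List.getElem_of_mem (hstep m).2.2.1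
      exact ⟨n, (hE (m + 1) n hn).trans hnm⟩

end Adversary

lemma exists_isEnum_liminf_upperDensity_eq_zero {L : ℕ → Set ℕ} {K : Set ℕ}
    (hinf : ∀ i, (L i).Infinite) (hK : K.Infinite) (hC : ∀ ε > 0, HasSparseCovers L K ε)
    {f : List ℕ → ℕ} (hf : GuaranteesValidity L f) :
    ∃ E, IsEnum E K ∧ liminf (fun t => upperDensity (L (f (epref E t))) K) atTop = 0 := by
  obtain ⟨E, hE, hsmall⟩ := exists_isEnum_of_forall_extension hK
    (fun m q => upperDensity (L (f q)) K ≤ 1 / (m + 1)) fun m _ hp hpK _ hx =>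
      exists_extension_upperDensity_le hinf (hC _ Nat.one_div_pos_of_nat) hf hp hpK hx
  refine ⟨E, hE, (liminf_upperDensity_eq_zero_iff _ K).2 fun δ hδ => ?_⟩
  obtain ⟨m₀, hm₀⟩ := exists_nat_one_div_lt hδ
  refine frequently_atTop.2 fun N => ?_
  obtain ⟨t, ht, hdens⟩ := hsmall (max N m₀)
  refine ⟨t, (le_max_left _ _).trans ht, hdens.trans_lt (lt_of_le_of_lt ?_ hm₀)⟩
  gcongr
  exact le_max_right _ _

/-- An instance has vanishing breadth (every valid index-based algorithm has, on
some enumeration of `K = L z`, `liminf_t μ_up(L (i_t), K) = 0`) if and only if for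
every `ε > 0` there is an infinite perfect tower of languages from the collection
with terminal language `K` all of whose languages have upper density at most `ε`
in `K`. -/
theorem stmt7 (L : ℕ → Set ℕ) (hinf : ∀ i, (L i).Infinite) (z : ℕ) :
    (∀ f : List ℕ → ℕ, GuaranteesValidity L f →
        ∃ E : ℕ → ℕ, IsEnum E (L z) ∧
          Filter.liminf (fun t : ℕ => upperDensity (L (f (epref E t))) (L z))
            Filter.atTop = 0)
      ↔
    (∀ ε : ℝ, 0 < ε →
        ∃ Λ : ℕ → Set ℕ, (∀ j, ∃ i, Λ j = L i) ∧ IsPerfectTower Λ (L z) ∧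
          ∀ j, upperDensity (Λ j) (L z) ≤ ε) := by
  constructor
  · intro hbreadth ε hε
    refine HasSparseCovers.exists_isPerfectTower hinf (by_contra fun hC => ?_)
    obtain ⟨E, hE, hzero⟩ := hbreadth _ guaranteesValidity_criticalGuess
    have hlow := (liminf_upperDensity_eq_zero_iff _ _).1 hzero _ (lt_min hε one_pos)
    obtain ⟨t, hlt, hle⟩ :=
      (hlow.and_eventually (eventually_le_upperDensity_criticalGuess (hinf z) hC hE)).exists
    exact hle.not_gt hlt
  · intro htower f hf
    refine exists_isEnum_liminf_upperDensity_eq_zero hinf (hinf z) (fun ε hε => ?_) hf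
    obtain ⟨Λ, hX, hT, hd⟩ := htower ε hε
    exact hT.hasSparseCovers hX hd
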